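/- arXiv:1212.4415 — 8 statements merged into one kernel-verified Lean document; each statement's English description precedes it below -/
import Mathlib

section
/- Let K ⊆ ℝ^m be a closed convex cone with dual K*. Define x ⊓ y = P_{x-K}(y) and x ⊓_* y = P_{x-K*}(y), and similarly x ⊔ y = P_{x+K}(y), x ⊔_* y = P_{x+K*}(y). Then for all x, y ∈ ℝ^m: x ⊓_* y = y ⊓ x and x ⊔_* y = y ⊔ x. -/
open RealInnerProductSpace

noncomputable section

abbrev E (m : ℕ) := EuclideanSpace ℝ (Fin m)

/-- `P` is the metric projection map: for every nonempty closed convex set `D`,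
`P D x` lies in `D` and satisfies the variational characterization. -/
def IsProjMap {m : ℕ} (P : Set (E m) → E m → E m) : Prop :=
  ∀ D : Set (E m), D.Nonempty → IsClosed D → Convex ℝ D →
    ∀ x, P D x ∈ D ∧ ∀ y ∈ D, ⟪P D x - x, P D x - y⟫ ≤ 0

/-- The dual cone of `K`. -/
def dualCone {m : ℕ} (K : Set (E m)) : Set (E m) :=
  {y | ∀ x ∈ K, 0 ≤ ⟪x, y⟫}

/-- `x ⊓ y = P_{x-K} y`. -/
def meet {m : ℕ} (P : Set (E m) → E m → E m) (K : Set (E m)) (x y : E m) : E m :=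
  P ((fun k => x - k) '' K) y

/-- `x ⊔ y = P_{x+K} y`. -/
def join {m : ℕ} (P : Set (E m) → E m → E m) (K : Set (E m)) (x y : E m) : E m :=
  P ((fun k => x + k) '' K) y

/-- `C` is `K`-invariant: closed under `meet` and `join`. -/
def KInv {m : ℕ} (P : Set (E m) → E m → E m) (K C : Set (E m)) : Prop :=
  ∀ x ∈ C, ∀ y ∈ C, meet P K x y ∈ C ∧ join P K x y ∈ C

/-! Let `v = P_{y-K}(x) = y - k` with `k ∈ K`. The variational inequality for `v` says
`⟪x - v, k' - k⟫ ≥ 0` for all `k' ∈ K`; since `K` is a cone this means exactly that `x - v ∈ K*`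
and `⟪x - v, k⟫ = 0`. Hence `v ∈ x - K*`, and with this complementarity the variational
inequality of `P_{x-K*}(y)` at `v` reduces to `⟪k, s⟫ ≥ 0` for `s ∈ K*`. The statement for `⊔`
follows by replacing `K` with `-K`, as `x + K = x - (-K)` and `(-K)* = -K*`. -/

open Pointwise

lemma image_sub_left_neg {G : Type*} [AddGroup G] (c : G) (S : Set G) :
    (fun k => c - k) '' (-S) = (fun k => c + k) '' S := by
  rw [← Set.image_neg_eq_neg, Set.image_image]
  simp only [sub_neg_eq_add]

lemma isClosed_image_sub_left {G : Type*} [AddGroup G] [TopologicalSpace G]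
    [IsTopologicalAddGroup G] (c : G) {S : Set G} (hS : IsClosed S) :
    IsClosed ((fun k => c - k) '' S) :=
  (Homeomorph.subLeft c).isClosedMap _ hS

lemma convex_image_sub_left {V : Type*} [AddCommGroup V] [Module ℝ V] (c : V) {S : Set V}
    (hS : Convex ℝ S) : Convex ℝ ((fun k => c - k) '' S) :=
  hS.affine_image (AffineEquiv.constVSub ℝ c).toAffineMap

lemma add_mem_of_convex_of_smul_mem {V : Type*} [AddCommGroup V] [Module ℝ V] {K : Set V}
    (hKconv : Convex ℝ K) (hKcone : ∀ t : ℝ, 0 ≤ t → ∀ v ∈ K, t • v ∈ K) {a b : V}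
    (ha : a ∈ K) (hb : b ∈ K) : a + b ∈ K := by
  have hmid : (1 / 2 : ℝ) • a + (1 / 2 : ℝ) • b ∈ K :=
    hKconv ha hb (by norm_num) (by norm_num) (by norm_num)
  convert hKcone 2 zero_le_two _ hmid using 1
  module

lemma eq_of_variational_ineq {F : Type*} [NormedAddCommGroup F] [InnerProductSpace ℝ F]
    {D : Set F} {x p q : F} (hpD : p ∈ D) (hp : ∀ z ∈ D, ⟪p - x, p - z⟫ ≤ 0)
    (hqD : q ∈ D) (hq : ∀ z ∈ D, ⟪q - x, q - z⟫ ≤ 0) : p = q := by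
  have hsum : ⟪p - q, p - q⟫ = ⟪p - x, p - q⟫ + ⟪q - x, q - p⟫ := by
    rw [show p - q = (p - x) - (q - x) by abel, inner_sub_left,
      show q - p = -((p - x) - (q - x)) by abel, inner_neg_right]
    ring
  have hle : ⟪p - q, p - q⟫ ≤ 0 := by linarith [hp q hqD, hq p hpD]
  exact sub_eq_zero.mp (real_inner_self_nonpos.mp hle)

section DualCone

variable {m : ℕ}

lemma isClosed_dualCone (K : Set (E m)) : IsClosed (dualCone K) := by
  have : dualCone K = ⋂ w ∈ K, {y : E m | 0 ≤ ⟪w, y⟫} := by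
    ext z; simp [dualCone]
  rw [this]
  exact isClosed_biInter fun w _ =>
    isClosed_le continuous_const (continuous_const.inner continuous_id)

lemma convex_dualCone (K : Set (E m)) : Convex ℝ (dualCone K) := by
  intro a ha b hb s t hs ht _ w hw
  have := ha w hw
  have := hb w hw
  rw [inner_add_right, real_inner_smul_right, real_inner_smul_right]
  positivity

lemma zero_mem_dualCone (K : Set (E m)) : (0 : E m) ∈ dualCone K :=
  fun _ _ => by simp

lemma dualCone_neg (K : Set (E m)) : dualCone (-K) = -dualCone K := by
  ext y
  constructor
  · intro h w hw
    simpa using h (-w) (by simpa using hw)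
  · intro h w hw
    simpa using h (-w) hw

lemma mem_dualCone_and_inner_eq_zero_of_inner_sub_nonneg {K : Set (E m)} (hK0 : (0 : E m) ∈ K)
    (hKadd : ∀ a ∈ K, ∀ b ∈ K, a + b ∈ K) {u k : E m} (hk : k ∈ K)
    (hu : ∀ k' ∈ K, 0 ≤ ⟪u, k' - k⟫) : u ∈ dualCone K ∧ ⟪k, u⟫ = 0 := by
  have hdual : u ∈ dualCone K := fun w hw => by
    simpa [real_inner_comm] using hu (k + w) (hKadd k hk w hw)
  refine ⟨hdual, le_antisymm ?_ (hdual k hk)⟩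
  simpa [real_inner_comm] using hu 0 hK0

lemma join_eq_meet_neg (P : Set (E m) → E m → E m) (K : Set (E m)) (x y : E m) :
    join P K x y = meet P (-K) x y := by
  rw [meet, image_sub_left_neg, join]

end DualCone

namespace IsProjMap

variable {m : ℕ} {P : Set (E m) → E m → E m} {K : Set (E m)}

lemma meet_spec (hP : IsProjMap P) (hKcl : IsClosed K) (hKconv : Convex ℝ K) (hKne : K.Nonempty)
    (y x : E m) :
    (∃ k ∈ K, y - k = meet P K y x) ∧
      ∀ k ∈ K, ⟪meet P K y x - x, meet P K y x - (y - k)⟫ ≤ 0 := by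
  obtain ⟨hmem, hvar⟩ := hP _ (hKne.image _) (isClosed_image_sub_left y hKcl)
    (convex_image_sub_left y hKconv) x
  exact ⟨hmem, fun k hk => hvar _ ⟨k, hk, rfl⟩⟩

lemma meet_eq_of_variational_ineq (hP : IsProjMap P) (hKcl : IsClosed K) (hKconv : Convex ℝ K)
    {y x k : E m} (hk : k ∈ K) (hvar : ∀ k' ∈ K, ⟪y - k - x, y - k - (y - k')⟫ ≤ 0) :
    meet P K y x = y - k := by
  obtain ⟨⟨k₀, hk₀, hv⟩, hvar₀⟩ := meet_spec hP hKcl hKconv ⟨k, hk⟩ y x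
  refine eq_of_variational_ineq (D := (fun k => y - k) '' K) (x := x) ⟨k₀, hk₀, hv⟩ ?_
    ⟨k, hk, rfl⟩ ?_
  · rintro _ ⟨k', hk', rfl⟩
    exact hvar₀ k' hk'
  · rintro _ ⟨k', hk', rfl⟩
    exact hvar k' hk'

theorem meet_dualCone (hP : IsProjMap P) (hKcl : IsClosed K) (hKconv : Convex ℝ K)
    (hKadd : ∀ a ∈ K, ∀ b ∈ K, a + b ∈ K) (hK0 : (0 : E m) ∈ K) (x y : E m) :
    meet P (dualCone K) x y = meet P K y x := by
  obtain ⟨⟨k, hk, hv⟩, hvar⟩ := meet_spec hP hKcl hKconv ⟨0, hK0⟩ y x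
  set v := meet P K y x
  have hnormal : ∀ k' ∈ K, 0 ≤ ⟪x - v, k' - k⟫ := fun k' hk' => by
    have := hvar k' hk'
    rw [show v - (y - k') = k' - k by rw [← hv]; abel, ← neg_sub x v, inner_neg_left] at this
    linarith
  obtain ⟨hdual, horth⟩ := mem_dualCone_and_inner_eq_zero_of_inner_sub_nonneg hK0 hKadd hk hnormal
  rw [← sub_sub_cancel x v]
  refine meet_eq_of_variational_ineq hP (isClosed_dualCone K) (convex_dualCone K) hdual
    fun s hs => ?_
  have hvy : v - y = -k := by rw [← hv, sub_sub_cancel_left]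
  calc ⟪x - (x - v) - y, x - (x - v) - (x - s)⟫ = ⟪-k, s - (x - v)⟫ := by
        rw [sub_sub_cancel, hvy]
        congr 1
        abel
    _ = ⟪k, x - v⟫ - ⟪k, s⟫ := by rw [inner_neg_left, inner_sub_right]; ring
    _ ≤ 0 := by linarith [hs k hk]

end IsProjMap

theorem star_ops_swap (m : ℕ)
    (P : Set (E m) → E m → E m) (hP : IsProjMap P)
    (K : Set (E m)) (hKcl : IsClosed K) (hKconv : Convex ℝ K)
    (hKcone : ∀ t : ℝ, 0 ≤ t → ∀ v ∈ K, t • v ∈ K) (hK0 : (0 : E m) ∈ K)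
    (x y : E m) :
    meet P (dualCone K) x y = meet P K y x ∧
      join P (dualCone K) x y = join P K y x := by
  have hKadd : ∀ a ∈ K, ∀ b ∈ K, a + b ∈ K := fun a ha b hb =>
    add_mem_of_convex_of_smul_mem hKconv hKcone ha hb
  have hKadd_neg : ∀ a ∈ -K, ∀ b ∈ -K, a + b ∈ -K := fun a ha b hb => by
    rw [Set.mem_neg, neg_add]
    exact hKadd _ ha _ hb
  refine ⟨hP.meet_dualCone hKcl hKconv hKadd hK0 x y, ?_⟩
  rw [join_eq_meet_neg, join_eq_meet_neg, ← dualCone_neg]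
  exact hP.meet_dualCone hKcl.neg hKconv.neg hKadd_neg (by simpa using hK0) x y
end
end

section
/- Let K ⊆ ℝ^m be a closed convex cone and x ⊓ y = P_{x-K}(y). Then for all x, y, z, w ∈ ℝ^m: ‖x ⊓ y - z ⊓ w‖ ≤ (3/2)(‖x - z‖ + ‖y - w‖). -/
open RealInnerProductSpace

noncomputable section

/-
The identity `x ⊓ y = x - P_K (x - y)` reduces the claim to the firm nonexpansiveness of `P_K`:
with `s = P_K u - P_K v` and `t = (u - v) - s` one has `⟪s, t⟫ ≥ 0`, so both `‖s‖` and `‖t‖` are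
at most `‖u - v‖`. Writing `a = x - z`, `b = y - w`, the difference of the meets is both `a - s`
and `b + t`, hence bounded by `‖a‖ + ‖a - b‖` and by `‖b‖ + ‖a - b‖`; averaging gives `3/2`.
-/

section InnerProduct

variable {F : Type*} [NormedAddCommGroup F] [InnerProductSpace ℝ F]

theorem norm_le_norm_add_of_inner_nonneg {s t : F} (h : 0 ≤ ⟪s, t⟫) : ‖s‖ ≤ ‖s + t‖ := by
  have hsq : ‖s‖ ^ 2 ≤ ‖s + t‖ ^ 2 := by
    rw [norm_add_sq_real]
    nlinarith [sq_nonneg ‖t‖]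
  exact pow_le_pow_iff_left₀ (norm_nonneg _) (norm_nonneg _) two_ne_zero |>.mp hsq

theorem eq_of_inner_sub_nonpos {D : Set F} {y p q : F} (hp : p ∈ D) (hq : q ∈ D)
    (hpD : ∀ d ∈ D, ⟪p - y, p - d⟫ ≤ 0) (hqD : ∀ d ∈ D, ⟪q - y, q - d⟫ ≤ 0) : p = q := by
  have hpq : ⟪p - q, p - q⟫ = ⟪p - y, p - q⟫ + ⟪q - y, q - p⟫ := by
    simp only [inner_sub_left, inner_sub_right]; ring
  have : ⟪p - q, p - q⟫ ≤ 0 := by linarith [hpD q hq, hqD p hp]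
  exact sub_eq_zero.mp (real_inner_self_nonpos.mp this)

end InnerProduct

namespace IsProjMap

variable {m : ℕ} {P : Set (E m) → E m → E m} {D : Set (E m)}

theorem inner_sub_proj_nonneg (hP : IsProjMap P) (hne : D.Nonempty) (hcl : IsClosed D)
    (hconv : Convex ℝ D) (u v : E m) :
    0 ≤ ⟪(u - v) - (P D u - P D v), P D u - P D v⟫ := by
  obtain ⟨hu, hvarU⟩ := hP D hne hcl hconv u
  obtain ⟨hv, hvarV⟩ := hP D hne hcl hconv v
  have expand : ⟪(u - v) - (P D u - P D v), P D u - P D v⟫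
      = -(⟪P D u - u, P D u - P D v⟫ + ⟪P D v - v, P D v - P D u⟫) := by
    simp only [inner_sub_left, inner_sub_right]; ring
  rw [expand]
  linarith [hvarU _ hv, hvarV _ hu]

theorem norm_proj_sub_le (hP : IsProjMap P) (hne : D.Nonempty) (hcl : IsClosed D)
    (hconv : Convex ℝ D) (u v : E m) : ‖P D u - P D v‖ ≤ ‖u - v‖ := by
  have hnonneg := hP.inner_sub_proj_nonneg hne hcl hconv u v
  rw [real_inner_comm] at hnonneg
  simpa only [add_sub_cancel] using norm_le_norm_add_of_inner_nonneg hnonneg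

theorem norm_sub_sub_proj_sub_le (hP : IsProjMap P) (hne : D.Nonempty) (hcl : IsClosed D)
    (hconv : Convex ℝ D) (u v : E m) : ‖(u - v) - (P D u - P D v)‖ ≤ ‖u - v‖ := by
  have h := norm_le_norm_add_of_inner_nonneg (hP.inner_sub_proj_nonneg hne hcl hconv u v)
  rwa [sub_add_cancel] at h

end IsProjMap

theorem meet_eq_sub_proj {m : ℕ} {P : Set (E m) → E m → E m} (hP : IsProjMap P)
    {K : Set (E m)} (hne : K.Nonempty) (hcl : IsClosed K) (hconv : Convex ℝ K) (x y : E m) :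
    meet P K x y = x - P K (x - y) := by
  obtain ⟨hKmem, hKvar⟩ := hP K hne hcl hconv (x - y)
  have hDcl : IsClosed ((fun k => x - k) '' K) := (Homeomorph.subLeft x).isClosedMap K hcl
  have hDconv : Convex ℝ ((fun k => x - k) '' K) := by
    rw [← Set.singleton_sub]
    exact (convex_singleton x).sub hconv
  obtain ⟨hmem, hvar⟩ := hP _ (hne.image _) hDcl hDconv y
  refine eq_of_inner_sub_nonpos hmem ⟨_, hKmem, rfl⟩ hvar ?_
  rintro _ ⟨k, hk, rfl⟩
  have translate : ⟪(x - P K (x - y)) - y, (x - P K (x - y)) - (x - k)⟫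
      = ⟪P K (x - y) - (x - y), P K (x - y) - k⟫ := by
    simp only [inner_sub_left, inner_sub_right]; ring
  exact translate ▸ hKvar k hk

theorem meet_lipschitz_general (m : ℕ)
    (P : Set (E m) → E m → E m) (hP : IsProjMap P)
    (K : Set (E m)) (hKcl : IsClosed K) (hKconv : Convex ℝ K)
    (hK0 : (0 : E m) ∈ K)
    (x y z w : E m) :
    ‖meet P K x y - meet P K z w‖ ≤ (3 / 2) * (‖x - z‖ + ‖y - w‖) := by
  have hne : K.Nonempty := ⟨0, hK0⟩
  rw [meet_eq_sub_proj hP hne hKcl hKconv, meet_eq_sub_proj hP hne hKcl hKconv]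
  set p := P K (x - y)
  set q := P K (z - w)
  have huv : (x - y) - (z - w) = (x - z) - (y - w) := by abel
  have hs : ‖p - q‖ ≤ ‖(x - z) - (y - w)‖ :=
    huv ▸ hP.norm_proj_sub_le hne hKcl hKconv (x - y) (z - w)
  have ht : ‖((x - z) - (y - w)) - (p - q)‖ ≤ ‖(x - z) - (y - w)‖ :=
    huv ▸ hP.norm_sub_sub_proj_sub_le hne hKcl hKconv (x - y) (z - w)
  have via_s : (x - p) - (z - q) = (x - z) - (p - q) := by abel
  have via_t : (x - p) - (z - q) = (y - w) + (((x - z) - (y - w)) - (p - q)) := by abel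
  have h₁ := via_s ▸ norm_sub_le (x - z) (p - q)
  have h₂ := via_t ▸ norm_add_le (y - w) (((x - z) - (y - w)) - (p - q))
  linarith [norm_sub_le (x - z) (y - w)]

theorem meet_lipschitz (m : ℕ)
    (P : Set (E m) → E m → E m) (hP : IsProjMap P)
    (K : Set (E m)) (hKcl : IsClosed K) (hKconv : Convex ℝ K)
    (hKcone : ∀ t : ℝ, 0 ≤ t → ∀ v ∈ K, t • v ∈ K) (hK0 : (0 : E m) ∈ K)
    (x y z w : E m) :
    ‖meet P K x y - meet P K z w‖ ≤ (3 / 2) * (‖x - z‖ + ‖y - w‖) :=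
  meet_lipschitz_general m P hP K hKcl hKconv hK0 x y z w
end
end

section
/- Let K ⊆ ℝ^m be a closed convex cone with dual K*, and x ⊓ y = P_{x-K}(y), x ⊓_* y = P_{x-K*}(y). If z = λx + (1-λ)(x ⊓ y) and w = μy + (1-μ)(x ⊓ y) for some λ, μ ∈ [0,1], then z ⊓ w = x ⊓ y. -/
/-!
Write `x ⊓ y = x - k₀` with `k₀ ∈ K`. Because `K` is a cone, the variational inequality for the
projection onto `x - K` splits into the complementarity conditions `y - x ⊓ y ∈ K*` and
`⟪k₀, y - x ⊓ y⟫ = 0`, and conversely these conditions characterize the projection.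
Now `z = x ⊓ y + l • k₀` and `w - x ⊓ y = μ • (y - x ⊓ y)`, so the conditions for `z ⊓ w` hold
with `l • k₀` in place of `k₀` and the same point `x ⊓ y`.
-/

open RealInnerProductSpace

noncomputable section

section InnerProductSpace

variable {F : Type*} [NormedAddCommGroup F] [InnerProductSpace ℝ F]

theorem eq_of_inner_sub_nonpos_s10 {p q w : F} (hq : ⟪q - w, q - p⟫ ≤ 0)
    (hp : ⟪p - w, p - q⟫ ≤ 0) : q = p := by
  have hsum : ⟪q - p, q - p⟫ = ⟪q - w, q - p⟫ + ⟪p - w, p - q⟫ := by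
    rw [← neg_sub q p, inner_neg_right, ← sub_eq_add_neg, ← inner_sub_left,
      sub_sub_sub_cancel_right]
  exact sub_eq_zero.mp (real_inner_self_nonpos.mp (by linarith))

theorem inner_eq_zero_and_nonpos_of_cone {K : Set F}
    (hKcone : ∀ t : ℝ, 0 ≤ t → ∀ v ∈ K, t • v ∈ K) {a k₀ : F} (hk₀ : k₀ ∈ K)
    (h : ∀ k ∈ K, ⟪a, k - k₀⟫ ≤ 0) : ⟪a, k₀⟫ = 0 ∧ ∀ k ∈ K, ⟪a, k⟫ ≤ 0 := by
  have hzero := h 0 (by simpa using hKcone 0 le_rfl k₀ hk₀)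
  have htwo := h ((2 : ℝ) • k₀) (hKcone 2 zero_le_two k₀ hk₀)
  rw [zero_sub, inner_neg_right] at hzero
  rw [two_smul, add_sub_cancel_right] at htwo
  have hk₀_zero : ⟪a, k₀⟫ = 0 := by linarith
  refine ⟨hk₀_zero, fun k hk => ?_⟩
  have := h k hk
  rwa [inner_sub_right, hk₀_zero, sub_zero] at this

end InnerProductSpace

section Meet

variable {m : ℕ} {P : Set (E m) → E m → E m} {K : Set (E m)}

theorem meet_spec (hP : IsProjMap P) (hKcl : IsClosed K) (hKconv : Convex ℝ K)
    (hKne : K.Nonempty) (x y : E m) :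
    meet P K x y ∈ (fun k => x - k) '' K ∧
      ∀ k ∈ K, ⟪meet P K x y - y, meet P K x y - (x - k)⟫ ≤ 0 := by
  have hcl : IsClosed ((fun k => x - k) '' K) := (Homeomorph.subLeft x).isClosedMap K hKcl
  have hconv : Convex ℝ ((fun k => x - k) '' K) := by
    simpa [← sub_eq_add_neg] using hKconv.affinity x (-1)
  obtain ⟨hmem, hvar⟩ := hP _ (hKne.image _) hcl hconv y
  exact ⟨hmem, fun k hk => hvar (x - k) ⟨k, hk, rfl⟩⟩

theorem exists_meet_eq_sub_of_cone (hP : IsProjMap P) (hKcl : IsClosed K) (hKconv : Convex ℝ K)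
    (hKcone : ∀ t : ℝ, 0 ≤ t → ∀ v ∈ K, t • v ∈ K) (hKne : K.Nonempty) (x y : E m) :
    ∃ k₀ ∈ K, meet P K x y = x - k₀ ∧ ⟪k₀, y - meet P K x y⟫ = 0 ∧
      y - meet P K x y ∈ dualCone K := by
  obtain ⟨⟨k₀, hk₀, hp⟩, hvar⟩ := meet_spec hP hKcl hKconv hKne x y
  set p := meet P K x y
  have hvarK : ∀ k ∈ K, ⟪p - y, k - k₀⟫ ≤ 0 := fun k hk => by
    simpa [← hp] using hvar k hk
  obtain ⟨horth, hnonpos⟩ := inner_eq_zero_and_nonpos_of_cone hKcone hk₀ hvarK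
  refine ⟨k₀, hk₀, hp.symm, ?_, fun k hk => ?_⟩
  · rw [real_inner_comm, ← neg_sub, inner_neg_left, horth, neg_zero]
  · rw [← neg_sub, inner_neg_right, real_inner_comm]
    linarith [hnonpos k hk]

theorem meet_eq_sub_of_mem_dualCone (hP : IsProjMap P) (hKcl : IsClosed K)
    (hKconv : Convex ℝ K) {x y k₀ : E m} (hk₀ : k₀ ∈ K) (horth : ⟪k₀, y - (x - k₀)⟫ = 0)
    (hdual : y - (x - k₀) ∈ dualCone K) : meet P K x y = x - k₀ := by
  obtain ⟨⟨k, hk, hq : x - k = meet P K x y⟩, hqvar⟩ := meet_spec hP hKcl hKconv ⟨k₀, hk₀⟩ x y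
  refine eq_of_inner_sub_nonpos_s10 (hqvar k₀ hk₀) ?_
  have hdiff : x - k₀ - meet P K x y = k - k₀ := by rw [← hq]; abel
  rw [hdiff, ← neg_sub y, inner_neg_left, inner_sub_right, real_inner_comm k,
    real_inner_comm k₀, horth]
  linarith [hdual k hk]

end Meet

theorem meet_of_segments (m : ℕ)
    (P : Set (E m) → E m → E m) (hP : IsProjMap P)
    (K : Set (E m)) (hKcl : IsClosed K) (hKconv : Convex ℝ K)
    (hKcone : ∀ t : ℝ, 0 ≤ t → ∀ v ∈ K, t • v ∈ K) (hK0 : (0 : E m) ∈ K)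
    (x y z w : E m) (l μ : ℝ) (hl : l ∈ Set.Icc (0 : ℝ) 1) (hμ : μ ∈ Set.Icc (0 : ℝ) 1)
    (hz : z = l • x + (1 - l) • meet P K x y)
    (hw : w = μ • y + (1 - μ) • meet P K x y) :
    meet P K z w = meet P K x y := by
  obtain ⟨k₀, hk₀, hp, horth, hdual⟩ :=
    exists_meet_eq_sub_of_cone hP hKcl hKconv hKcone ⟨0, hK0⟩ x y
  set p := meet P K x y
  have hzp : z - l • k₀ = p := by rw [hz, hp]; module
  have hwp : w - p = μ • (y - p) := by rw [hw]; module
  rw [← hzp]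
  refine meet_eq_sub_of_mem_dualCone hP hKcl hKconv (hKcone l hl.1 k₀ hk₀) ?_ fun k hk => ?_
  · rw [hzp, hwp, real_inner_smul_left, real_inner_smul_right, horth, mul_zero, mul_zero]
  · rw [hzp, hwp, real_inner_smul_right]
    exact mul_nonneg hμ.1 (hdual k hk)
end
end

section
/- Let K ⊆ ℝ^m be a closed convex cone and C ⊆ ℝ^m a nonempty closed convex set. If P_C is K-isotone (x ≤_K y implies P_C(x) ≤_K P_C(y)), then C is K-invariant: for all x, y ∈ C, P_{x-K}(y) ∈ C and P_{x+K}(y) ∈ C. -/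
open RealInnerProductSpace

noncomputable section

/-! Let `D = x + K` and `z = P_D y`. Isotonicity and `P_C x = x` give `P_C z ∈ D`, so the
variational inequalities of `P_D` at `y` (tested at `P_C z`) and of `P_C` at `z` (tested at
`y ∈ C`) add up to `‖z - P_C z‖² ≤ 0`; hence `z = P_C z ∈ C`. The meet is the join for the
cone `-K`, with respect to which `P_C` is isotone as well. -/

theorem eq_of_inner_sub_nonpos_s12 {F : Type*} [NormedAddCommGroup F] [InnerProductSpace ℝ F]
    {y z u : F} (hz : ⟪z - y, z - u⟫ ≤ 0) (hu : ⟪u - z, u - y⟫ ≤ 0) : z = u := by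
  have hsum : ⟪z - u, z - u⟫ = ⟪z - y, z - u⟫ + ⟪u - z, u - y⟫ := by
    rw [← neg_sub z u, inner_neg_left, ← real_inner_comm (z - u) (u - y), ← sub_eq_add_neg,
      ← inner_sub_left, sub_sub_sub_cancel_right]
  have hzero : ⟪z - u, z - u⟫ = 0 :=
    le_antisymm (by linarith) real_inner_self_nonneg
  exact sub_eq_zero.mp (inner_self_eq_zero.mp hzero)

namespace IsProjMap

variable {m : ℕ} {P : Set (E m) → E m → E m} (hP : IsProjMap P) {C D K : Set (E m)}
include hP

theorem apply_eq_self (hC : C.Nonempty) (hCcl : IsClosed C) (hCconv : Convex ℝ C)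
    {w : E m} (hw : w ∈ C) : P C w = w :=
  sub_eq_zero.mp <| inner_self_eq_zero.mp <|
    le_antisymm ((hP C hC hCcl hCconv w).2 w hw) real_inner_self_nonneg

theorem apply_mem_of_apply_apply_mem (hC : C.Nonempty) (hCcl : IsClosed C)
    (hCconv : Convex ℝ C) (hD : D.Nonempty) (hDcl : IsClosed D) (hDconv : Convex ℝ D)
    {y : E m} (hy : y ∈ C) (h : P C (P D y) ∈ D) : P D y ∈ C := by
  have hz := (hP D hD hDcl hDconv y).2 _ h
  have hu := (hP C hC hCcl hCconv (P D y)).2 y hy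
  rw [eq_of_inner_sub_nonpos_s12 hz hu]
  exact (hP C hC hCcl hCconv _).1

theorem join_mem_of_isotone (hK : K.Nonempty) (hKcl : IsClosed K)
    (hKconv : Convex ℝ K) (hC : C.Nonempty) (hCcl : IsClosed C) (hCconv : Convex ℝ C)
    (hIso : ∀ x y : E m, y - x ∈ K → P C y - P C x ∈ K)
    {x y : E m} (hx : x ∈ C) (hy : y ∈ C) : join P K x y ∈ C := by
  set D := (fun k => x + k) '' K
  have hD : D = (fun w => -x + w) ⁻¹' K := Set.image_add_left
  have hDne : D.Nonempty := hK.image _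
  have hDcl : IsClosed D := by
    rw [hD]; exact hKcl.preimage (continuous_const_add (-x))
  have hDconv : Convex ℝ D := hKconv.translate x
  refine hP.apply_mem_of_apply_apply_mem hC hCcl hCconv hDne hDcl hDconv hy ?_
  have hzD := (hP _ hDne hDcl hDconv y).1
  rw [hD, Set.mem_preimage, neg_add_eq_sub] at hzD ⊢
  simpa only [hP.apply_eq_self hC hCcl hCconv hx] using hIso x _ hzD

end IsProjMap

theorem meet_eq_join_neg {m : ℕ} (P : Set (E m) → E m → E m) (K : Set (E m)) (x y : E m) :
    meet P K x y = join P (-K) x y := by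
  simp only [meet, join, ← Set.image_neg_eq_neg, Set.image_image, ← sub_eq_add_neg]

theorem isotone_imp_invariant_general (m : ℕ)
    (P : Set (E m) → E m → E m) (hP : IsProjMap P)
    (K : Set (E m)) (hKcl : IsClosed K) (hKconv : Convex ℝ K)
    (hK0 : (0 : E m) ∈ K)
    (C : Set (E m)) (hC : C.Nonempty) (hCcl : IsClosed C) (hCconv : Convex ℝ C)
    (hIso : ∀ x y : E m, y - x ∈ K → P C y - P C x ∈ K) :
    KInv P K C := by
  have hIsoNeg : ∀ x y : E m, y - x ∈ -K → P C y - P C x ∈ -K := fun x y h => by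
    simpa only [Set.mem_neg, neg_sub] using hIso y x (by simpa only [Set.mem_neg, neg_sub] using h)
  have hK : K.Nonempty := ⟨0, hK0⟩
  intro x hx y hy
  constructor
  · rw [meet_eq_join_neg]
    exact hP.join_mem_of_isotone hK.neg hKcl.neg hKconv.neg hC hCcl hCconv hIsoNeg hx hy
  · exact hP.join_mem_of_isotone hK hKcl hKconv hC hCcl hCconv hIso hx hy

theorem isotone_imp_invariant (m : ℕ)
    (P : Set (E m) → E m → E m) (hP : IsProjMap P)
    (K : Set (E m)) (hKcl : IsClosed K) (hKconv : Convex ℝ K)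
    (hKcone : ∀ t : ℝ, 0 ≤ t → ∀ v ∈ K, t • v ∈ K) (hK0 : (0 : E m) ∈ K)
    (C : Set (E m)) (hC : C.Nonempty) (hCcl : IsClosed C) (hCconv : Convex ℝ C)
    (hIso : ∀ x y : E m, y - x ∈ K → P C y - P C x ∈ K) :
    KInv P K C :=
  isotone_imp_invariant_general m P hP K hKcl hKconv hK0 C hC hCcl hCconv hIso
end
end

section
/- Let K ⊆ ℝ^m be a subdual simplicial cone (K ⊆ K* and ≤_K is a lattice order on ℝ^m), and let C ⊆ ℝ^m be a nonempty closed convex set such that P_C is K-isotone. Then C is a sublattice of (ℝ^m, ≤_K): for all x, y ∈ C, x ∨ y ∈ C and x ∧ y ∈ C. -/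
open RealInnerProductSpace

noncomputable section

/-!
For `s = x ⊔ y` with `x, y ∈ C`, isotonicity and `P_C x = x`, `P_C y = y` give `x, y ≤_K P_C s`,
hence `s ≤_K P_C s`. Testing the variational inequality at `x` and splitting
`P_C s - x = (P_C s - s) + (s - x)` into two vectors of `K`, subduality yields
`‖P_C s - s‖² ≤ 0`, so `s = P_C s ∈ C`. The meet is symmetric.
-/

lemma eq_zero_of_inner_add_nonpos {m : ℕ} {K : Set (E m)} (hK : K ⊆ dualCone K) {a b : E m}
    (ha : a ∈ K) (hb : b ∈ K) (h : ⟪a, a + b⟫ ≤ 0) : a = 0 := by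
  have hab : 0 ≤ ⟪a, b⟫ := hK hb a ha
  rw [inner_add_right] at h
  exact real_inner_self_nonpos.mp (by linarith)

namespace IsProjMap

variable {m : ℕ} {P : Set (E m) → E m → E m} {D K : Set (E m)}

lemma mem (hP : IsProjMap P) (hD : D.Nonempty) (hDcl : IsClosed D) (hDconv : Convex ℝ D)
    (z : E m) : P D z ∈ D :=
  (hP D hD hDcl hDconv z).1

lemma inner_nonpos (hP : IsProjMap P) (hD : D.Nonempty) (hDcl : IsClosed D)
    (hDconv : Convex ℝ D) (z : E m) {w : E m} (hw : w ∈ D) : ⟪P D z - z, P D z - w⟫ ≤ 0 :=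
  (hP D hD hDcl hDconv z).2 w hw

lemma apply_eq_self_s16 (hP : IsProjMap P) (hD : D.Nonempty) (hDcl : IsClosed D)
    (hDconv : Convex ℝ D) {z : E m} (hz : z ∈ D) : P D z = z :=
  sub_eq_zero.mp (real_inner_self_nonpos.mp (hP.inner_nonpos hD hDcl hDconv z hz))

lemma apply_eq_of_le_apply (hP : IsProjMap P) (hD : D.Nonempty) (hDcl : IsClosed D)
    (hDconv : Convex ℝ D) (hK : K ⊆ dualCone K) {x s : E m} (hx : x ∈ D)
    (hxs : s - x ∈ K) (hs : P D s - s ∈ K) : P D s = s := by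
  refine sub_eq_zero.mp (eq_zero_of_inner_add_nonpos hK hs hxs ?_)
  simpa only [sub_add_sub_cancel] using hP.inner_nonpos hD hDcl hDconv s hx

lemma apply_eq_of_apply_le (hP : IsProjMap P) (hD : D.Nonempty) (hDcl : IsClosed D)
    (hDconv : Convex ℝ D) (hK : K ⊆ dualCone K) {x i : E m} (hx : x ∈ D)
    (hix : x - i ∈ K) (hi : i - P D i ∈ K) : P D i = i := by
  refine (sub_eq_zero.mp (eq_zero_of_inner_add_nonpos hK hi hix ?_)).symm
  rw [sub_add_sub_cancel', ← neg_sub (P D i), ← neg_sub (P D i), inner_neg_neg]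
  exact hP.inner_nonpos hD hDcl hDconv i hx

end IsProjMap

theorem isotone_imp_sublattice_general (m : ℕ)
    (P : Set (E m) → E m → E m) (hP : IsProjMap P)
    (K : Set (E m))
    (hSubdual : K ⊆ dualCone K)
    (sup inf : E m → E m → E m)
    (hsup : ∀ x y : E m, sup x y - x ∈ K ∧ sup x y - y ∈ K ∧
      ∀ z : E m, z - x ∈ K → z - y ∈ K → z - sup x y ∈ K)
    (hinf : ∀ x y : E m, x - inf x y ∈ K ∧ y - inf x y ∈ K ∧
      ∀ z : E m, x - z ∈ K → y - z ∈ K → inf x y - z ∈ K)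
    (C : Set (E m)) (hC : C.Nonempty) (hCcl : IsClosed C) (hCconv : Convex ℝ C)
    (hIso : ∀ x y : E m, y - x ∈ K → P C y - P C x ∈ K) :
    ∀ x ∈ C, ∀ y ∈ C, sup x y ∈ C ∧ inf x y ∈ C := by
  have fix {z : E m} (hz : z ∈ C) : P C z = z := hP.apply_eq_self_s16 hC hCcl hCconv hz
  have le_apply {x s : E m} (hx : x ∈ C) (h : s - x ∈ K) : P C s - x ∈ K := by
    simpa only [fix hx] using hIso x s h
  have apply_le {x i : E m} (hx : x ∈ C) (h : x - i ∈ K) : x - P C i ∈ K := by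
    simpa only [fix hx] using hIso i x h
  intro x hx y hy
  obtain ⟨hxs, hys, hs_least⟩ := hsup x y
  obtain ⟨hix, hiy, hi_greatest⟩ := hinf x y
  have hs : P C (sup x y) - sup x y ∈ K := hs_least _ (le_apply hx hxs) (le_apply hy hys)
  have hi : inf x y - P C (inf x y) ∈ K := hi_greatest _ (apply_le hx hix) (apply_le hy hiy)
  constructor
  · rw [← hP.apply_eq_of_le_apply hC hCcl hCconv hSubdual hx hxs hs]
    exact hP.mem hC hCcl hCconv _
  · rw [← hP.apply_eq_of_apply_le hC hCcl hCconv hSubdual hx hix hi]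
    exact hP.mem hC hCcl hCconv _

theorem isotone_imp_sublattice (m : ℕ)
    (P : Set (E m) → E m → E m) (hP : IsProjMap P)
    (K : Set (E m)) (hKcl : IsClosed K) (hKconv : Convex ℝ K)
    (hKcone : ∀ t : ℝ, 0 ≤ t → ∀ v ∈ K, t • v ∈ K) (hK0 : (0 : E m) ∈ K)
    (hSubdual : K ⊆ dualCone K)
    (sup inf : E m → E m → E m)
    (hsup : ∀ x y : E m, sup x y - x ∈ K ∧ sup x y - y ∈ K ∧
      ∀ z : E m, z - x ∈ K → z - y ∈ K → z - sup x y ∈ K)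
    (hinf : ∀ x y : E m, x - inf x y ∈ K ∧ y - inf x y ∈ K ∧
      ∀ z : E m, x - z ∈ K → y - z ∈ K → inf x y - z ∈ K)
    (C : Set (E m)) (hC : C.Nonempty) (hCcl : IsClosed C) (hCconv : Convex ℝ C)
    (hIso : ∀ x y : E m, y - x ∈ K → P C y - P C x ∈ K) :
    ∀ x ∈ C, ∀ y ∈ C, sup x y ∈ C ∧ inf x y ∈ C :=
  isotone_imp_sublattice_general m P hP K hSubdual sup inf hsup hinf C hC hCcl hCconv hIso
end
end

section
/- Let e_1,…,e_m be a basis of ℝ^m, K = cone{e_1,…,e_m} the generated simplicial cone, and u_1,…,u_m the dual basis with ⟨e_i, u_j⟩ = δ_{ij}, so K* = cone{u_1,…,u_m}. Let a be a unit vector and H = {x : ⟨a,x⟩ = 0}. Then the hyperplane H is K-invariant if and only if ⟨a, e_i⟩⟨a, u_j⟩ ≤ δ_{ij} for all i, j ∈ {1,…,m}. -/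
open RealInnerProductSpace

noncomputable section

/-!
A closed convex set `D` mapped into itself by `π x = x - ⟪a, x⟫ a` projects `H` into `H`: for
`y ∈ H` and `z = P_D y`, testing the variational inequality against `π z ∈ D` gives
`⟪a, z⟫² ≤ 0`. The translates `x ± K` with `x ∈ H` inherit `π`-invariance from `K`, so
`π(K) ⊆ K` makes `H` `K`-invariant. Conversely, for `k ∈ K` the projection `z` of `π k ∈ H` onto
`K = 0 + K` lies in `H`, so `z - π k ⊥ a` while `k - π k ∥ a`, and the variational inequality at
`k` forces `z = π k ∈ K`. In the dual-basis coordinates `⟪·, u j⟫` the cone is an orthant, and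
`π(K) ⊆ K` reduces to the generators: `δᵢⱼ - ⟪a, e i⟫⟪a, u j⟫ ≥ 0`.
-/

section SimplicialCone

variable {F : Type*} [NormedAddCommGroup F] [InnerProductSpace ℝ F] {ι : Type*} [Fintype ι]

def simplicialCone (b : Module.Basis ι ℝ F) : Set F :=
  {x | ∃ t : ι → ℝ, (∀ i, 0 ≤ t i) ∧ x = ∑ i, t i • b i}

variable (b : Module.Basis ι ℝ F)

theorem zero_mem_simplicialCone : (0 : F) ∈ simplicialCone b :=
  ⟨0, fun _ => le_rfl, by simp⟩

variable [DecidableEq ι] {u : ι → F}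

theorem inner_dual_eq_repr (hu : ∀ i j, ⟪b i, u j⟫ = if i = j then (1 : ℝ) else 0) (x : F) (j : ι) :
    ⟪x, u j⟫ = b.repr x j := by
  conv_lhs => rw [← b.sum_repr x]
  rw [sum_inner]
  simp [real_inner_smul_left, hu]

theorem mem_simplicialCone_iff (hu : ∀ i j, ⟪b i, u j⟫ = if i = j then (1 : ℝ) else 0) {x : F} :
    x ∈ simplicialCone b ↔ ∀ j, 0 ≤ ⟪x, u j⟫ := by
  simp only [inner_dual_eq_repr b hu]
  constructor
  · rintro ⟨t, ht, rfl⟩ j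
    rw [b.repr_sum_self]; exact ht j
  · exact fun h => ⟨fun i => b.repr x i, h, (b.sum_repr x).symm⟩

theorem simplicialCone_eq_iInter (hu : ∀ i j, ⟪b i, u j⟫ = if i = j then (1 : ℝ) else 0) :
    simplicialCone b = ⋂ j, {x | 0 ≤ ⟪x, u j⟫} := by
  ext x
  simp [mem_simplicialCone_iff b hu]

theorem isClosed_simplicialCone (hu : ∀ i j, ⟪b i, u j⟫ = if i = j then (1 : ℝ) else 0) :
    IsClosed (simplicialCone b) := by
  rw [simplicialCone_eq_iInter b hu]
  exact isClosed_iInter fun j =>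
    isClosed_le continuous_const (continuous_id.inner continuous_const)

theorem convex_simplicialCone (hu : ∀ i j, ⟪b i, u j⟫ = if i = j then (1 : ℝ) else 0) :
    Convex ℝ (simplicialCone b) := by
  rw [simplicialCone_eq_iInter b hu]
  exact convex_iInter fun j => convex_halfSpace_ge ((innerₗ F).flip (u j)).isLinear 0

theorem mapsTo_sub_inner_smul_simplicialCone_iff
    (hu : ∀ i j, ⟪b i, u j⟫ = if i = j then (1 : ℝ) else 0) (a : F) :
    Set.MapsTo (fun x => x - ⟪a, x⟫ • a) (simplicialCone b) (simplicialCone b) ↔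
      ∀ i j, ⟪a, b i⟫ * ⟪a, u j⟫ ≤ if i = j then (1 : ℝ) else 0 := by
  have coord : ∀ x j, ⟪x - ⟪a, x⟫ • a, u j⟫ = ⟪x, u j⟫ - ⟪a, x⟫ * ⟪a, u j⟫ := fun x j => by
    rw [inner_sub_left, real_inner_smul_left]
  constructor
  · intro h i j
    have hbi : b i ∈ simplicialCone b :=
      (mem_simplicialCone_iff b hu).2 fun j => by rw [hu]; split_ifs <;> norm_num
    have := (mem_simplicialCone_iff b hu).1 (h hbi) j
    rw [coord, hu] at this
    linarith
  · rintro hc x ⟨t, ht, rfl⟩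
    rw [mem_simplicialCone_iff b hu]
    intro j
    have hcoef : ∀ i, ⟪∑ k, t k • b k, u i⟫ = t i := fun i => by
      simp [sum_inner, real_inner_smul_left, hu]
    rw [coord, hcoef, inner_sum, Finset.sum_mul]
    calc (0 : ℝ) ≤ ∑ i, t i * ((if i = j then 1 else 0) - ⟪a, b i⟫ * ⟪a, u j⟫) :=
          Finset.sum_nonneg fun i _ => mul_nonneg (ht i) (sub_nonneg.2 (hc i j))
      _ = t j - ∑ i, ⟪a, t i • b i⟫ * ⟪a, u j⟫ := by
          simp [mul_sub, real_inner_smul_right, Finset.sum_sub_distrib, mul_assoc]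

end SimplicialCone

section Translate

variable {F : Type*} [NormedAddCommGroup F] [InnerProductSpace ℝ F] {a : F} {C : Set F}

theorem Set.MapsTo.sub_inner_smul_neg (hC : Set.MapsTo (fun x => x - ⟪a, x⟫ • a) C C) :
    Set.MapsTo (fun x => x - ⟪a, x⟫ • a) (-C) (-C) := by
  intro x hx
  simpa [inner_neg_right, neg_add_eq_sub] using hC hx

theorem Set.MapsTo.sub_inner_smul_translate (hC : Set.MapsTo (fun x => x - ⟪a, x⟫ • a) C C)
    {x : F} (hx : ⟪a, x⟫ = 0) :
    Set.MapsTo (fun x => x - ⟪a, x⟫ • a) ((x + ·) '' C) ((x + ·) '' C) := by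
  rintro _ ⟨k, hk, rfl⟩
  refine ⟨_, hC hk, ?_⟩
  simp only [inner_add_right, hx, zero_add]
  abel

end Translate

section Projection

variable {m : ℕ} {P : Set (E m) → E m → E m} {a : E m}

theorem inner_projMap_eq_zero (hP : IsProjMap P) {D : Set (E m)} (hne : D.Nonempty)
    (hcl : IsClosed D) (hcv : Convex ℝ D) (hD : Set.MapsTo (fun x => x - ⟪a, x⟫ • a) D D)
    {y : E m} (hy : ⟪a, y⟫ = 0) : ⟪a, P D y⟫ = 0 := by
  obtain ⟨hzD, hvar⟩ := hP D hne hcl hcv y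
  set z := P D y
  have key : ⟪z - y, z - (z - ⟪a, z⟫ • a)⟫ = ⟪a, z⟫ * ⟪a, z⟫ := by
    rw [sub_sub_cancel, real_inner_smul_right, real_inner_comm a, inner_sub_right, hy, sub_zero]
  have hsq : ⟪a, z⟫ * ⟪a, z⟫ ≤ 0 := key ▸ hvar _ (hD hzD)
  exact mul_self_eq_zero.1 (le_antisymm hsq (mul_self_nonneg _))

theorem inner_projMap_translate_eq_zero (hP : IsProjMap P) {C : Set (E m)} (hne : C.Nonempty)
    (hcl : IsClosed C) (hcv : Convex ℝ C) (hC : Set.MapsTo (fun x => x - ⟪a, x⟫ • a) C C)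
    {x y : E m} (hx : ⟪a, x⟫ = 0) (hy : ⟪a, y⟫ = 0) : ⟪a, P ((x + ·) '' C) y⟫ = 0 :=
  inner_projMap_eq_zero hP (hne.image _) ((Homeomorph.addLeft x).isClosedMap C hcl)
    (hcv.translate x) (hC.sub_inner_smul_translate hx) hy

theorem mapsTo_of_inner_projMap_eq_zero (hP : IsProjMap P) {K : Set (E m)} (hne : K.Nonempty)
    (hcl : IsClosed K) (hcv : Convex ℝ K) (ha : ⟪a, a⟫ = 1)
    (h : ∀ w, ⟪a, w⟫ = 0 → ⟪a, P K w⟫ = 0) :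
    Set.MapsTo (fun x => x - ⟪a, x⟫ • a) K K := by
  intro k hk
  set w := k - ⟪a, k⟫ • a
  have hw : ⟪a, w⟫ = 0 := by rw [inner_sub_right, real_inner_smul_right, ha, mul_one, sub_self]
  obtain ⟨hzK, hvar⟩ := hP K hne hcl hcv w
  set z := P K w
  have horth : ⟪z - w, a⟫ = 0 := by rw [real_inner_comm, inner_sub_right, h w hw, hw, sub_zero]
  have hzk : z - k = (z - w) - ⟪a, k⟫ • a := by simp only [w]; abel
  have hle : ⟪z - w, z - w⟫ ≤ 0 := by
    simpa [hzk, inner_sub_right, real_inner_smul_right, horth] using hvar k hk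
  have hzw : z = w := sub_eq_zero.1 (real_inner_self_nonpos.1 hle)
  change w ∈ K
  exact hzw ▸ hzK

theorem kInv_hyperplane_iff_mapsTo (hP : IsProjMap P) {K : Set (E m)} (hne : K.Nonempty)
    (hcl : IsClosed K) (hcv : Convex ℝ K) (ha : ⟪a, a⟫ = 1) :
    KInv P K {x | ⟪a, x⟫ = 0} ↔ Set.MapsTo (fun x => x - ⟪a, x⟫ • a) K K := by
  constructor
  · intro hinv
    refine mapsTo_of_inner_projMap_eq_zero hP hne hcl hcv ha fun w hw => ?_
    simpa [join] using (hinv 0 (by simp) w hw).2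
  · intro hK x hx y hy
    have hmeet : (fun k => x - k) '' K = (x + ·) '' (-K) := by
      rw [← Set.image_neg_eq_neg, Set.image_image]
      simp only [sub_eq_add_neg]
    refine ⟨?_, inner_projMap_translate_eq_zero hP hne hcl hcv hK hx hy⟩
    change ⟪a, meet P K x y⟫ = 0
    rw [meet, hmeet]
    exact inner_projMap_translate_eq_zero hP hne.neg hcl.neg hcv.neg hK.sub_inner_smul_neg hx hy

end Projection

theorem simplicial_hyperplane_invariance (m : ℕ)
    (P : Set (E m) → E m → E m) (hP : IsProjMap P)
    (b : Module.Basis (Fin m) ℝ (E m)) (u : Fin m → E m)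
    (hu : ∀ i j, ⟪b i, u j⟫ = if i = j then (1 : ℝ) else 0)
    (K : Set (E m))
    (hK : K = {x : E m | ∃ t : Fin m → ℝ, (∀ i, 0 ≤ t i) ∧ x = ∑ i, t i • b i})
    (a : E m) (ha : ‖a‖ = 1)
    (H : Set (E m)) (hH : H = {x : E m | ⟪a, x⟫ = 0}) :
    KInv P K H ↔
      ∀ i j, ⟪a, b i⟫ * ⟪a, u j⟫ ≤ if i = j then (1 : ℝ) else 0 := by
  subst hK hH
  have haa : ⟪a, a⟫ = 1 := by rw [real_inner_self_eq_norm_sq, ha, one_pow]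
  exact (kInv_hyperplane_iff_mapsTo hP ⟨0, zero_mem_simplicialCone b⟩
    (isClosed_simplicialCone b hu) (convex_simplicialCone b hu) haa).trans
    (mapsTo_sub_inner_smul_simplicialCone_iff b hu a)
end
end

section
/- Let e_1,…,e_m be an orthonormal basis of ℝ^m and K = ℝ^m_+ the nonnegative orthant in these coordinates. A hyperplane H through 0 with unit normal a = (a^1,…,a^m) is K-invariant if and only if a^i a^j ≤ 0 whenever i ≠ j. -/
open RealInnerProductSpace

noncomputable section

/-!
Under the projection map, `meet` and `join` for the nonnegative orthant are the coordinatewise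
`⊓` and `⊔`, so the question is when the hyperplane `a ⬝ᵥ x = 0` is a sublattice of `ℝ^m`.
Since `x ⊓ y = x - (x - y)⁺` and `x ⊔ y = y + (x - y)⁺`, it is one exactly when `a ⬝ᵥ d = 0`
forces `a ⬝ᵥ d⁺ = 0`. If the off-diagonal products `a i * a j` are nonpositive, then
`(a ⬝ᵥ d⁺) * (a ⬝ᵥ d⁻) = ∑ i j, a i a j d_i⁺ d_j⁻ ≤ 0`, while `a ⬝ᵥ d⁺ = a ⬝ᵥ d⁻`, so both
vanish. Conversely, if `a i * a j > 0` then `d = a j • eᵢ - a i • eⱼ` lies on the hyperplane but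
`d ⊓ 0` does not.
-/

open Matrix WithLp

section DotProduct

variable {ι R : Type*} [Fintype ι] [CommRing R] [LinearOrder R] [IsStrictOrderedRing R]
  {a : ι → R}

lemma posPart_mul_negPart_eq_zero (r : R) : r⁺ * r⁻ = 0 := by
  rcases le_total r 0 with h | h
  · simp [posPart_eq_zero.2 h]
  · simp [negPart_eq_zero.2 h]

lemma dotProduct_posPart_eq_zero (ha : ∀ i j, i ≠ j → a i * a j ≤ 0) {d : ι → R}
    (hd : a ⬝ᵥ d = 0) : a ⬝ᵥ d⁺ = 0 := by
  have heq : a ⬝ᵥ d⁺ = a ⬝ᵥ d⁻ := by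
    rw [← sub_eq_zero, ← dotProduct_sub, posPart_sub_negPart, hd]
  have hprod : a ⬝ᵥ d⁺ * a ⬝ᵥ d⁻ ≤ 0 := by
    simp only [dotProduct, Finset.sum_mul_sum]
    refine Finset.sum_nonpos fun i _ => Finset.sum_nonpos fun j _ => ?_
    rw [mul_mul_mul_comm]
    obtain rfl | hij := eq_or_ne i j
    · simp [posPart_mul_negPart_eq_zero]
    · exact mul_nonpos_of_nonpos_of_nonneg (ha i j hij)
        (mul_nonneg (posPart_nonneg _) (negPart_nonneg _))
  rw [← heq] at hprod
  exact mul_self_eq_zero.1 (le_antisymm hprod (mul_self_nonneg _))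

lemma dotProduct_inf_eq_zero (ha : ∀ i j, i ≠ j → a i * a j ≤ 0) {x y : ι → R}
    (hx : a ⬝ᵥ x = 0) (hy : a ⬝ᵥ y = 0) : a ⬝ᵥ (x ⊓ y) = 0 := by
  rw [inf_eq_sub_posPart_sub, dotProduct_sub, hx,
    dotProduct_posPart_eq_zero ha (by rw [dotProduct_sub, hx, hy, sub_zero]), sub_zero]

lemma dotProduct_sup_eq_zero (ha : ∀ i j, i ≠ j → a i * a j ≤ 0) {x y : ι → R}
    (hx : a ⬝ᵥ x = 0) (hy : a ⬝ᵥ y = 0) : a ⬝ᵥ (x ⊔ y) = 0 := by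
  rw [sup_eq_add_posPart_sub, dotProduct_add, hy,
    dotProduct_posPart_eq_zero ha (by rw [dotProduct_sub, hx, hy, sub_zero]), add_zero]

lemma mul_nonpos_of_dotProduct_inf_zero_eq_zero
    (h : ∀ d : ι → R, a ⬝ᵥ d = 0 → a ⬝ᵥ (d ⊓ 0) = 0) {i j : ι} (hij : i ≠ j) :
    a i * a j ≤ 0 := by
  classical
  set d : ι → R := Pi.single i (a j) - Pi.single j (a i)
  have hd_zero : ∀ k, k ≠ i ∧ k ≠ j → d k = 0 := fun k hk => by simp [d, hk.1, hk.2]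
  have hdi : d i = a j := by simp [d, hij]
  have hdj : d j = -a i := by simp [d, hij.symm]
  have hd : a ⬝ᵥ d = 0 := by
    rw [dotProduct, Fintype.sum_eq_add i j hij (by simp +contextual [hd_zero]), hdi, hdj]
    ring
  have hmeet := h d hd
  rw [dotProduct, Fintype.sum_eq_add i j hij (by simp +contextual [hd_zero])] at hmeet
  simp only [Pi.inf_apply, Pi.zero_apply, hdi, hdj] at hmeet
  by_contra! hpos
  rcases mul_pos_iff.1 hpos with ⟨hi, hj⟩ | ⟨hi, hj⟩
  · rw [inf_of_le_right hj.le, inf_of_le_left (neg_nonpos.2 hi.le)] at hmeet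
    linarith
  · rw [inf_of_le_left hj.le, inf_of_le_right (neg_nonneg.2 hi.le)] at hmeet
    linarith

end DotProduct

section Projection

variable {m : ℕ} {P : Set (E m) → E m → E m}

lemma IsProjMap.apply_eq (hP : IsProjMap P) {D : Set (E m)} (hne : D.Nonempty)
    (hcl : IsClosed D) (hcv : Convex ℝ D) {x p : E m} (hp : p ∈ D)
    (hvar : ∀ z ∈ D, ⟪p - x, p - z⟫ ≤ 0) : P D x = p := by
  obtain ⟨hq, hqvar⟩ := hP D hne hcl hcv x
  set q := P D x
  have hsq : ⟪q - p, q - p⟫ ≤ 0 :=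
    calc ⟪q - p, q - p⟫ = ⟪q - x, q - p⟫ + ⟪p - x, p - q⟫ := by
          simp only [inner_sub_left, inner_sub_right, real_inner_comm]
          ring
      _ ≤ 0 := add_nonpos (hqvar p hp) (hvar q hq)
  exact sub_eq_zero.1 (real_inner_self_nonpos.1 hsq)

lemma IsProjMap.apply_preimage_Iic (hP : IsProjMap P) (c : Fin m → ℝ) (y : E m) :
    P (ofLp ⁻¹' Set.Iic c) y = toLp 2 (c ⊓ ofLp y) := by
  refine hP.apply_eq ⟨toLp 2 c, show c ≤ c from le_rfl⟩ (isClosed_Iic.preimage (PiLp.continuous_ofLp 2 _))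
    ((convex_Iic c).linear_preimage (WithLp.linearEquiv 2 ℝ _).toLinearMap)
    (show c ⊓ ofLp y ≤ c from inf_le_left)
    fun z hz => ?_
  rw [EuclideanSpace.inner_eq_star_dotProduct]
  refine Finset.sum_nonpos fun i _ => ?_
  have hzi : z i ≤ c i := hz i
  simp only [star_trivial, PiLp.sub_apply, Pi.inf_apply]
  rcases le_total (c i) (y i) with h | h
  · rw [inf_of_le_left h]
    exact mul_nonpos_of_nonneg_of_nonpos (sub_nonneg.2 hzi) (sub_nonpos.2 h)
  · simp [inf_of_le_right h]

lemma IsProjMap.apply_preimage_Ici (hP : IsProjMap P) (c : Fin m → ℝ) (y : E m) :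
    P (ofLp ⁻¹' Set.Ici c) y = toLp 2 (c ⊔ ofLp y) := by
  refine hP.apply_eq ⟨toLp 2 c, show c ≤ c from le_rfl⟩ (isClosed_Ici.preimage (PiLp.continuous_ofLp 2 _))
    ((convex_Ici c).linear_preimage (WithLp.linearEquiv 2 ℝ _).toLinearMap)
    (show c ≤ c ⊔ ofLp y from le_sup_left)
    fun z hz => ?_
  rw [EuclideanSpace.inner_eq_star_dotProduct]
  refine Finset.sum_nonpos fun i _ => ?_
  have hzi : c i ≤ z i := hz i
  simp only [star_trivial, PiLp.sub_apply, Pi.sup_apply]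
  rcases le_total (c i) (y i) with h | h
  · simp [sup_of_le_right h]
  · rw [sup_of_le_left h]
    exact mul_nonpos_of_nonpos_of_nonneg (sub_nonpos.2 hzi) (sub_nonneg.2 h)

lemma image_sub_orthant (x : E m) :
    (fun k => x - k) '' {k : E m | ∀ i, 0 ≤ k i} = ofLp ⁻¹' Set.Iic (ofLp x) := by
  ext z
  constructor
  · rintro ⟨k, hk, rfl⟩ i
    simpa using hk i
  · intro hz
    exact ⟨x - z, fun i => by simpa using hz i, sub_sub_cancel x z⟩

lemma image_add_orthant (x : E m) :
    (fun k => x + k) '' {k : E m | ∀ i, 0 ≤ k i} = ofLp ⁻¹' Set.Ici (ofLp x) := by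
  ext z
  constructor
  · rintro ⟨k, hk, rfl⟩ i
    simpa using hk i
  · intro hz
    exact ⟨z - x, fun i => by simpa using hz i, add_sub_cancel x z⟩

lemma meet_orthant (hP : IsProjMap P) (x y : E m) :
    meet P {k : E m | ∀ i, 0 ≤ k i} x y = toLp 2 (ofLp x ⊓ ofLp y) := by
  rw [meet, image_sub_orthant, hP.apply_preimage_Iic]

lemma join_orthant (hP : IsProjMap P) (x y : E m) :
    join P {k : E m | ∀ i, 0 ≤ k i} x y = toLp 2 (ofLp x ⊔ ofLp y) := by
  rw [join, image_add_orthant, hP.apply_preimage_Ici]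

end Projection

theorem orthant_hyperplane_invariance_general (m : ℕ)
    (P : Set (E m) → E m → E m) (hP : IsProjMap P)
    (K : Set (E m)) (hK : K = {x : E m | ∀ i, 0 ≤ x i})
    (a : E m)
    (H : Set (E m)) (hH : H = {x : E m | ⟪a, x⟫ = 0}) :
    KInv P K H ↔ ∀ i j, i ≠ j → a i * a j ≤ 0 := by
  have hmem : ∀ z : E m, z ∈ H ↔ ofLp a ⬝ᵥ ofLp z = 0 := fun z => by
    rw [hH, Set.mem_ofPred_eq, EuclideanSpace.inner_eq_star_dotProduct, star_trivial,
      dotProduct_comm]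
  subst hK
  simp only [KInv, meet_orthant hP, join_orthant hP, hmem]
  constructor
  · intro h i j hij
    exact mul_nonpos_of_dotProduct_inf_zero_eq_zero
      (fun d hd => (h (toLp 2 d) hd 0 (by simp)).1) hij
  · intro ha x hx y hy
    exact ⟨dotProduct_inf_eq_zero ha hx hy, dotProduct_sup_eq_zero ha hx hy⟩

theorem orthant_hyperplane_invariance (m : ℕ)
    (P : Set (E m) → E m → E m) (hP : IsProjMap P)
    (K : Set (E m)) (hK : K = {x : E m | ∀ i, 0 ≤ x i})
    (a : E m) (ha : ‖a‖ = 1)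
    (H : Set (E m)) (hH : H = {x : E m | ⟪a, x⟫ = 0}) :
    KInv P K H ↔ ∀ i j, i ≠ j → a i * a j ≤ 0 :=
  orthant_hyperplane_invariance_general m P hP K hK a H hH
end
end

section
/- Let K ⊆ ℝ^m be a closed convex cone with dual K*. A nonempty closed convex set C is K-invariant if and only if it is K*-invariant; consequently, P_C is K-isotone if and only if P_C is K*-isotone. -/
open RealInnerProductSpace

noncomputable section

/-!
With `x ⊓ y = x - P_K (x - y)`, `x ⊔ y = x + P_K (y - x)` and Moreau's formula
`P_{K*} z = z + P_K (-z)`, one gets `x ⊓_* y = y ⊓ x` and `x ⊔_* y = y ⊔ x`, so `K`- and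
`K*`-invariance coincide. For every closed convex cone `D`, `D`-invariance of `C` is equivalent to
`D`-isotonicity of `P_C`: both directions test the variational inequality of `P_C` at suitable
meets and joins. This transfers the first equivalence to the second.
-/

open ProperCone

section Projection

variable {m : ℕ} {P : Set (E m) → E m → E m} {C : Set (E m)}

theorem IsProjMap.eq_of_inner_le (hP : IsProjMap P) (hC : C.Nonempty) (hCcl : IsClosed C)
    (hCconv : Convex ℝ C) {z p : E m} (hp : p ∈ C) (h : ∀ y ∈ C, ⟪p - z, p - y⟫ ≤ 0) :
    P C z = p := by
  obtain ⟨hmem, hvar⟩ := hP C hC hCcl hCconv z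
  have h₁ := hvar p hp
  have h₂ := h _ hmem
  have : ⟪P C z - p, P C z - p⟫ ≤ 0 := by
    simp only [inner_sub_left, inner_sub_right, real_inner_comm p] at h₁ h₂ ⊢
    linarith
  exact sub_eq_zero.mp (real_inner_self_nonpos.mp this)

theorem IsProjMap.apply_eq_self_s19 (hP : IsProjMap P) (hC : C.Nonempty) (hCcl : IsClosed C)
    (hCconv : Convex ℝ C) {x : E m} (hx : x ∈ C) : P C x = x :=
  hP.eq_of_inner_le hC hCcl hCconv hx fun y _ => by simp

theorem IsProjMap.mem_of_inner_apply_sub_nonpos (hP : IsProjMap P) (hC : C.Nonempty)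
    (hCcl : IsClosed C) (hCconv : Convex ℝ C) {a y : E m} (hy : y ∈ C)
    (h : ⟪P C a - a, y - a⟫ ≤ 0) : a ∈ C := by
  obtain ⟨hmem, hvar⟩ := hP C hC hCcl hCconv a
  have hsplit :
      ⟪P C a - a, P C a - a⟫ = ⟪P C a - a, P C a - y⟫ + ⟪P C a - a, y - a⟫ := by
    rw [← inner_add_right, sub_add_sub_cancel]
  have : P C a - a = 0 := real_inner_self_nonpos.mp (by linarith [hvar y hy])
  rwa [← sub_eq_zero.mp this]

theorem IsProjMap.meet_eq (hP : IsProjMap P) (hC : C.Nonempty) (hCcl : IsClosed C)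
    (hCconv : Convex ℝ C) (x y : E m) : meet P C x y = x - P C (x - y) := by
  unfold meet
  obtain ⟨hmem, hvar⟩ := hP C hC hCcl hCconv (x - y)
  have hcl : IsClosed ((fun k => x - k) '' C) := (Homeomorph.subLeft x).isClosed_image.mpr hCcl
  refine hP.eq_of_inner_le (hC.image _) hcl
    (hCconv.affine_image (AffineEquiv.constVSub ℝ x).toAffineMap) (Set.mem_image_of_mem _ hmem) ?_
  rintro _ ⟨k, hk, rfl⟩
  dsimp only
  have h := hvar k hk
  rw [← inner_neg_neg] at h
  convert h using 2 <;> abel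

theorem IsProjMap.join_eq (hP : IsProjMap P) (hC : C.Nonempty) (hCcl : IsClosed C)
    (hCconv : Convex ℝ C) (x y : E m) : join P C x y = x + P C (y - x) := by
  unfold join
  obtain ⟨hmem, hvar⟩ := hP C hC hCcl hCconv (y - x)
  have hcl : IsClosed ((fun k => x + k) '' C) := (Homeomorph.addLeft x).isClosed_image.mpr hCcl
  refine hP.eq_of_inner_le (hC.image _) hcl
    (hCconv.translate x) (Set.mem_image_of_mem _ hmem) ?_
  rintro _ ⟨k, hk, rfl⟩
  dsimp only
  convert hvar k hk using 2 <;> abel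

end Projection

section Cone

variable {m : ℕ} {P : Set (E m) → E m → E m}

theorem IsProjMap.apply_mem_properCone (hP : IsProjMap P) (D : ProperCone ℝ (E m)) (z : E m) :
    P D z ∈ D :=
  (hP D D.nonempty D.isClosed D.convex z).1

theorem IsProjMap.inner_apply_sub_self_apply_eq_zero (hP : IsProjMap P) (D : ProperCone ℝ (E m))
    (z : E m) : ⟪P D z - z, P D z⟫ = 0 := by
  obtain ⟨hmem, hvar⟩ := hP D D.nonempty D.isClosed D.convex z
  have h₀ := hvar 0 D.zero_mem
  have h₂ := hvar ((2 : ℝ) • P D z) (D.smul_mem hmem zero_le_two)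
  rw [sub_zero] at h₀
  rw [two_smul, sub_add_cancel_left, inner_neg_right] at h₂
  linarith

theorem IsProjMap.apply_sub_self_mem_innerDual (hP : IsProjMap P) (D : ProperCone ℝ (E m))
    (z : E m) : P D z - z ∈ innerDual (D : Set (E m)) := by
  rw [mem_innerDual]
  intro k hk
  have h := (hP D D.nonempty D.isClosed D.convex z).2 k hk
  rw [inner_sub_right, hP.inner_apply_sub_self_apply_eq_zero, real_inner_comm] at h
  linarith

theorem IsProjMap.apply_innerDual (hP : IsProjMap P) (K : ProperCone ℝ (E m)) (z : E m) :
    P (innerDual (K : Set (E m))) z = z + P K (-z) := by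
  have hmem : z + P K (-z) ∈ innerDual (K : Set (E m)) := by
    simpa [add_comm] using hP.apply_sub_self_mem_innerDual K (-z)
  refine hP.eq_of_inner_le (innerDual _).nonempty (innerDual _).isClosed (innerDual _).convex
    hmem fun u hu => ?_
  have horth := hP.inner_apply_sub_self_apply_eq_zero K (-z)
  have hpos := mem_innerDual.mp hu (hP.apply_mem_properCone K (-z))
  rw [sub_neg_eq_add] at horth
  rw [add_sub_cancel_left, inner_sub_right, real_inner_comm, add_comm z]
  linarith

theorem IsProjMap.meet_innerDual (hP : IsProjMap P) (K : ProperCone ℝ (E m)) (x y : E m) :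
    meet P (innerDual (K : Set (E m))) x y = meet P K y x := by
  rw [hP.meet_eq (innerDual _).nonempty (innerDual _).isClosed (innerDual _).convex,
    hP.meet_eq K.nonempty K.isClosed K.convex, hP.apply_innerDual, neg_sub]
  abel

theorem IsProjMap.join_innerDual (hP : IsProjMap P) (K : ProperCone ℝ (E m)) (x y : E m) :
    join P (innerDual (K : Set (E m))) x y = join P K y x := by
  rw [hP.join_eq (innerDual _).nonempty (innerDual _).isClosed (innerDual _).convex,
    hP.join_eq K.nonempty K.isClosed K.convex, hP.apply_innerDual, neg_sub]
  abel

theorem IsProjMap.kInv_innerDual_iff (hP : IsProjMap P) (K : ProperCone ℝ (E m))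
    (C : Set (E m)) : KInv P (innerDual (K : Set (E m))) C ↔ KInv P K C := by
  simp only [KInv, hP.meet_innerDual, hP.join_innerDual]
  exact ⟨fun h x hx y hy => h y hy x hx, fun h x hx y hy => h y hy x hx⟩

end Cone

def KIsotone {m : ℕ} (D : Set (E m)) (f : E m → E m) : Prop :=
  ∀ x y, y - x ∈ D → f y - f x ∈ D

section Isotone

variable {m : ℕ} {P : Set (E m) → E m → E m} {C : Set (E m)}

theorem IsProjMap.kIsotone_of_kInv (hP : IsProjMap P) (D : ProperCone ℝ (E m))
    (hC : C.Nonempty) (hCcl : IsClosed C) (hCconv : Convex ℝ C) (hinv : KInv P D C) :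
    KIsotone D (P C) := by
  intro x y hxy
  obtain ⟨hu, hvar_u⟩ := hP C hC hCcl hCconv x
  obtain ⟨hv, hvar_v⟩ := hP C hC hCcl hCconv y
  set u := P C x
  set v := P C y
  set p := P D (v - u)
  have hjoin : u + p ∈ C := by
    simpa only [hP.join_eq D.nonempty D.isClosed D.convex] using (hinv u hu v hv).2
  have hmeet : v - p ∈ C := by
    simpa only [hP.meet_eq D.nonempty D.isClosed D.convex] using (hinv v hv u hu).1
  obtain ⟨q, hq⟩ : ∃ q, q = v - u - p := ⟨_, rfl⟩
  have h₁ : ⟪v - y, q⟫ ≤ 0 := by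
    simpa only [show v - (u + p) = q by rw [hq]; abel] using hvar_v _ hjoin
  have h₂ : 0 ≤ ⟪u - x, q⟫ := by
    have := hvar_u _ hmeet
    rw [show u - (v - p) = -q by rw [hq]; abel, inner_neg_right] at this
    linarith
  have hr : p - (v - u) = -q := by rw [hq]; abel
  have h₃ : ⟪y - x, q⟫ ≤ 0 := by
    have := mem_innerDual.mp (hP.apply_sub_self_mem_innerDual D (v - u)) hxy
    rw [hr, inner_neg_right] at this
    linarith
  have horth : ⟪p, q⟫ = 0 := by
    have := hP.inner_apply_sub_self_apply_eq_zero D (v - u)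
    rwa [hr, inner_neg_left, neg_eq_zero, real_inner_comm] at this
  have hsplit : ⟪q, q⟫ = ⟪v - y, q⟫ + ⟪y - x, q⟫ - ⟪u - x, q⟫ - ⟪p, q⟫ := by
    rw [← inner_add_left, ← inner_sub_left, ← inner_sub_left, hq]
    congr 1
    abel
  have hq0 : q = 0 := real_inner_self_nonpos.mp (by linarith)
  rw [hq0, eq_comm, sub_eq_zero] at hq
  rw [hq]
  exact hP.apply_mem_properCone D (v - u)

theorem IsProjMap.meet_mem_of_kIsotone (hP : IsProjMap P) (D : ProperCone ℝ (E m))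
    (hC : C.Nonempty) (hCcl : IsClosed C) (hCconv : Convex ℝ C) (hiso : KIsotone D (P C))
    {x y : E m} (hx : x ∈ C) (hy : y ∈ C) : meet P D x y ∈ C := by
  rw [hP.meet_eq D.nonempty D.isClosed D.convex]
  set p := P D (x - y)
  refine hP.mem_of_inner_apply_sub_nonpos hC hCcl hCconv hy ?_
  have hb : x - P C (x - p) ∈ D := by
    have := hiso (x - p) x (by simpa using (hP.apply_mem_properCone D (x - y)))
    rwa [hP.apply_eq_self_s19 hC hCcl hCconv hx] at this
  have hpos := mem_innerDual.mp (hP.apply_sub_self_mem_innerDual D (x - y)) hb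
  have horth := hP.inner_apply_sub_self_apply_eq_zero D (x - y)
  calc ⟪P C (x - p) - (x - p), y - (x - p)⟫
        = ⟪p, p - (x - y)⟫ - ⟪x - P C (x - p), p - (x - y)⟫ := by
          rw [← inner_sub_left]; congr 1 <;> abel
    _ ≤ 0 := by rw [real_inner_comm, horth]; linarith

theorem IsProjMap.join_mem_of_kIsotone (hP : IsProjMap P) (D : ProperCone ℝ (E m))
    (hC : C.Nonempty) (hCcl : IsClosed C) (hCconv : Convex ℝ C) (hiso : KIsotone D (P C))
    {x y : E m} (hx : x ∈ C) (hy : y ∈ C) : join P D x y ∈ C := by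
  rw [hP.join_eq D.nonempty D.isClosed D.convex]
  set p := P D (y - x)
  refine hP.mem_of_inner_apply_sub_nonpos hC hCcl hCconv hy ?_
  have hb : P C (x + p) - x ∈ D := by
    have := hiso x (x + p) (by simpa using (hP.apply_mem_properCone D (y - x)))
    rwa [hP.apply_eq_self_s19 hC hCcl hCconv hx] at this
  have hpos := mem_innerDual.mp (hP.apply_sub_self_mem_innerDual D (y - x)) hb
  have horth := hP.inner_apply_sub_self_apply_eq_zero D (y - x)
  calc ⟪P C (x + p) - (x + p), y - (x + p)⟫
        = ⟪p, p - (y - x)⟫ - ⟪P C (x + p) - x, p - (y - x)⟫ := by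
          rw [← inner_sub_left, ← inner_neg_neg]; congr 1 <;> abel
    _ ≤ 0 := by rw [real_inner_comm, horth]; linarith

theorem IsProjMap.kInv_iff_kIsotone (hP : IsProjMap P) (D : ProperCone ℝ (E m))
    (hC : C.Nonempty) (hCcl : IsClosed C) (hCconv : Convex ℝ C) :
    KInv P D C ↔ KIsotone D (P C) :=
  ⟨hP.kIsotone_of_kInv D hC hCcl hCconv, fun hiso _ hx _ hy =>
    ⟨hP.meet_mem_of_kIsotone D hC hCcl hCconv hiso hx hy,
      hP.join_mem_of_kIsotone D hC hCcl hCconv hiso hx hy⟩⟩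

end Isotone

theorem dualCone_eq_innerDual {m : ℕ} (K : Set (E m)) :
    dualCone K = (innerDual K : Set (E m)) :=
  rfl

theorem exists_properCone_coe_eq {m : ℕ} {K : Set (E m)} (hcl : IsClosed K)
    (hconv : Convex ℝ K) (hcone : ∀ t : ℝ, 0 ≤ t → ∀ v ∈ K, t • v ∈ K)
    (h0 : (0 : E m) ∈ K) :
    ∃ K' : ProperCone ℝ (E m), (K' : Set (E m)) = K := by
  -- `a + b = 2 • (a / 2 + b / 2)`
  have hadd : ∀ a ∈ K, ∀ b ∈ K, a + b ∈ K := fun a ha b hb => by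
    have hmid := hconv ha hb (by norm_num : (0 : ℝ) ≤ 1 / 2) (by norm_num : (0 : ℝ) ≤ 1 / 2)
      (by norm_num)
    simpa [smul_add, smul_smul] using hcone 2 zero_le_two _ hmid
  exact ⟨⟨PointedCone.ofConeComb K ⟨0, h0⟩ fun x hx y hy a ha b hb =>
    hadd _ (hcone a ha x hx) _ (hcone b hb y hy), hcl⟩, rfl⟩

theorem invariance_and_isotonicity_dual (m : ℕ)
    (P : Set (E m) → E m → E m) (hP : IsProjMap P)
    (K : Set (E m)) (hKcl : IsClosed K) (hKconv : Convex ℝ K)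
    (hKcone : ∀ t : ℝ, 0 ≤ t → ∀ v ∈ K, t • v ∈ K) (hK0 : (0 : E m) ∈ K)
    (C : Set (E m)) (hC : C.Nonempty) (hCcl : IsClosed C) (hCconv : Convex ℝ C) :
    (KInv P K C ↔ KInv P (dualCone K) C) ∧
      ((∀ x y : E m, y - x ∈ K → P C y - P C x ∈ K) ↔
        (∀ x y : E m, y - x ∈ dualCone K → P C y - P C x ∈ dualCone K)) := by
  obtain ⟨K, rfl⟩ := exists_properCone_coe_eq hKcl hKconv hKcone hK0
  have hinv : KInv P K C ↔ KInv P (innerDual (K : Set (E m))) C :=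
    (hP.kInv_innerDual_iff K C).symm
  rw [dualCone_eq_innerDual]
  exact ⟨hinv, (hP.kInv_iff_kIsotone K hC hCcl hCconv).symm.trans
    (hinv.trans (hP.kInv_iff_kIsotone (innerDual _) hC hCcl hCconv))⟩
end
end
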